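/- arXiv:2603.09375 — 2 statements merged into one kernel-verified Lean document; each statement's English description precedes it below -/
import Mathlib

section
/- For an expansive homeomorphism f : X → X of a compact metric space, if CR(f) is a finite set, then X is countable. -/
open Metric Filter Function Set

variable {X : Type*} [MetricSpace X]

/-- A δ-chain of length ≥ 1 from x to y. -/
def IsChain' (f : X → X) (δ : ℝ) (x y : X) : Prop :=
  ∃ k : ℕ, 1 ≤ k ∧ ∃ c : ℕ → X, c 0 = x ∧ c k = y ∧ ∀ i < k, dist (f (c i)) (c (i + 1)) ≤ δ

/-- The chain recurrent set. -/
def CR (f : X → X) : Set X := {x | ∀ δ > 0, IsChain' f δ x x}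

/-- Sensitive points of f restricted to S. -/
def SenOn (f : X → X) (S : Set X) : Set X :=
  {x | x ∈ S ∧ ∃ a > 0, ∀ δ > 0, ∃ y ∈ S, dist x y ≤ δ ∧ ∃ i : ℕ, a < dist (f^[i] x) (f^[i] y)}

/-- Equicontinuity of a map (uniform over all forward iterates). -/
def Equicont (f : X → X) : Prop :=
  ∀ ε > 0, ∃ δ > 0, ∀ z w : X, dist z w ≤ δ → ∀ i : ℕ, dist (f^[i] z) (f^[i] w) ≤ ε

/-- The i-th iterate (i ∈ ℤ) of a homeomorphism. -/
def ziter (f : X ≃ₜ X) (i : ℤ) : X → X :=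
  fun x => if 0 ≤ i then (⇑f)^[i.toNat] x else (⇑f.symm)^[(-i).toNat] x

/-- Expansiveness of a homeomorphism. -/
def Expansive (f : X ≃ₜ X) : Prop :=
  ∃ e > 0, ∀ x y : X, (∀ i : ℤ, dist (ziter f i x) (ziter f i y) ≤ e) → x = y

/-- e is an expansive constant for f on S. -/
def ExpConstOn (f : X ≃ₜ X) (S : Set X) (e : ℝ) : Prop :=
  ∀ x y : X, (∀ i : ℤ, ziter f i x ∈ S) → (∀ i : ℤ, ziter f i y ∈ S) →
    (∀ i : ℤ, dist (ziter f i x) (ziter f i y) ≤ e) → x = y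

/-- Periodic points. -/
def Per (f : X → X) : Set X := {x | ∃ j : ℕ, 1 ≤ j ∧ f^[j] x = x}

/-- Closed r-neighborhood of a set. -/
def nbd (r : ℝ) (S : Set X) : Set X := {y | infDist y S ≤ r}

section Aux
open Topology

variable [CompactSpace X]

private lemma ucont (g : X → X) (hg : Continuous g) :
    ∀ ε > (0:ℝ), ∃ δ > (0:ℝ), ∀ u v : X, dist u v ≤ δ → dist (g u) (g v) ≤ ε := by
  intro ε hε
  have H := (Metric.uniformContinuous_iff).1 (CompactSpace.uniformContinuous_of_continuous hg)
  obtain ⟨δ, hδ, hH⟩ := H ε hε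
  exact ⟨δ/2, by positivity, fun u v huv => (hH (lt_of_le_of_lt huv (by linarith))).le⟩

private lemma limit_mem_CR (f : X ≃ₜ X) (x a : X) (n : ℕ → ℕ) (hn : StrictMono n)
    (ha : Tendsto (fun k => (⇑f)^[n k] x) atTop (𝓝 a)) : a ∈ CR ⇑f := by
  intro δ hδ
  obtain ⟨δ₁, hδ₁, hmod⟩ := ucont (⇑f) f.continuous (δ/2) (by linarith)
  have htend := (Metric.tendsto_atTop.1 ha) (min δ₁ (δ/2)) (lt_min hδ₁ (by linarith))
  obtain ⟨K₀, hK₀⟩ := htend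
  set k := K₀ with hk
  set l := K₀ + 1 with hl
  have hkl : n k < n l := hn (by omega)
  have h1 : dist ((⇑f)^[n k] x) a ≤ min δ₁ (δ/2) := (hK₀ k le_rfl).le
  have h2 : dist ((⇑f)^[n l] x) a ≤ δ/2 := le_trans (hK₀ l (by omega)).le (min_le_right _ _)
  have hfa : dist (f a) ((⇑f)^[n k + 1] x) ≤ δ/2 := by
    rw [Function.iterate_succ_apply' (⇑f) (n k) x]
    exact hmod a ((⇑f)^[n k] x) (by rw [dist_comm]; exact h1.trans (min_le_left _ _))
  set K := n l - n k with hK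
  have hK1 : 1 ≤ K := by omega
  refine ⟨K, hK1, fun i => if i = 0 ∨ K ≤ i then a else (⇑f)^[n k + i] x, by simp, by simp, ?_⟩
  intro i hi
  beta_reduce
  rcases Nat.eq_zero_or_pos i with rfl | hipos
  · simp only [true_or, if_pos]
    rcases eq_or_lt_of_le hK1 with hK1' | hK2
    · -- K = 1, so c 1 = a
      have hnl : n l = n k + 1 := by omega
      have : (if 0 + 1 = 0 ∨ K ≤ 0 + 1 then a else (⇑f)^[n k + (0+1)] x) = a := by
        simp [← hK1']
      rw [this]
      calc dist (f a) a ≤ dist (f a) ((⇑f)^[n k + 1] x) + dist ((⇑f)^[n k + 1] x) a :=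
            dist_triangle _ _ _
        _ ≤ δ/2 + δ/2 := add_le_add hfa (by rw [← hnl]; exact h2)
        _ = δ := by ring
    · have : (if 0 + 1 = 0 ∨ K ≤ 0 + 1 then a else (⇑f)^[n k + (0+1)] x)
          = (⇑f)^[n k + 1] x := by
        rw [if_neg]; omega
      rw [this]
      exact hfa.trans (by linarith)
  · have hci : (if i = 0 ∨ K ≤ i then a else (⇑f)^[n k + i] x) = (⇑f)^[n k + i] x := by
      rw [if_neg]; omega
    rw [hci]
    rcases eq_or_lt_of_le (Nat.succ_le_of_lt hi) with hiK | hiK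
    · -- i + 1 = K
      have : (if i + 1 = 0 ∨ K ≤ i + 1 then a else (⇑f)^[n k + (i+1)] x) = a := by
        rw [if_pos]; omega
      rw [this]
      have he2 : f ((⇑f)^[n k + i] x) = (⇑f)^[n l] x := by
        rw [← Function.iterate_succ_apply' (⇑f) (n k + i) x]
        congr 1
        omega
      rw [he2]
      exact h2.trans (by linarith)
    · have : (if i + 1 = 0 ∨ K ≤ i + 1 then a else (⇑f)^[n k + (i+1)] x)
          = (⇑f)^[n k + (i+1)] x := by
        rw [if_neg]; omega
      rw [this]
      have he2 : f ((⇑f)^[n k + i] x) = (⇑f)^[n k + (i+1)] x := by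
        rw [← Function.iterate_succ_apply' (⇑f) (n k + i) x]
        congr 1 <;> omega
      rw [he2, dist_self]
      linarith

private lemma CR_symm_subset (f : X ≃ₜ X) : CR ⇑f.symm ⊆ CR ⇑f := by
  intro x hx δ hδ
  obtain ⟨δ', hδ', hmod⟩ := ucont (⇑f) f.continuous δ hδ
  obtain ⟨k, hk, c, hc0, hck, hc⟩ := hx δ' hδ'
  refine ⟨k, hk, fun j => c (k - j), by simpa [Nat.sub_zero] using hck, by simp [hc0], ?_⟩
  intro j hj
  show dist (f (c (k - j))) (c (k - (j+1))) ≤ δ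
  have hc' := hc (k - j - 1) (by omega)
  have hmod' := hmod (f.symm (c (k - j - 1))) (c (k - j - 1 + 1)) hc'
  rw [Homeomorph.apply_symm_apply] at hmod'
  rw [show k - (j+1) = k - j - 1 from by omega]
  rw [show k - j = k - j - 1 + 1 from by omega]
  rw [dist_comm]
  exact hmod'

private lemma CR_mapsTo (f : X ≃ₜ X) : ∀ x ∈ CR ⇑f, f x ∈ CR ⇑f := by
  intro x hx δ hδ
  obtain ⟨δ', hδ', hmod⟩ := ucont (⇑f) f.continuous δ hδ
  obtain ⟨k, hk, c, hc0, hck, hc⟩ := hx δ' hδ'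
  exact ⟨k, hk, fun i => f (c i), by simp [hc0], by simp [hck],
    fun i hi => hmod _ _ (hc i hi)⟩

private lemma exists_sep {S : Set X} (hS : S.Finite) :
    ∃ s > (0:ℝ), ∀ a ∈ S, ∀ b ∈ S, dist a b < s → a = b := by
  classical
  set T := (hS.toFinset ×ˢ hS.toFinset).filter (fun p => p.1 ≠ p.2) with hT
  by_cases hne : T.Nonempty
  · refine ⟨T.inf' hne (fun p => dist p.1 p.2), ?_, ?_⟩
    · rw [gt_iff_lt, Finset.lt_inf'_iff]
      intro p hp
      simp only [hT, Finset.mem_filter] at hp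
      exact dist_pos.2 hp.2
    · intro a ha b hb hab
      by_contra hne'
      have hmem : (a, b) ∈ T := by
        simp only [hT, Finset.mem_filter, Finset.mem_product, Set.Finite.mem_toFinset]
        exact ⟨⟨ha, hb⟩, hne'⟩
      exact absurd hab (not_lt.2 (Finset.inf'_le _ hmem))
  · refine ⟨1, one_pos, fun a ha b hb _ => ?_⟩
    by_contra hne'
    exact hne ⟨(a, b), by
      simp only [hT, Finset.mem_filter, Finset.mem_product, Set.Finite.mem_toFinset]
      exact ⟨⟨ha, hb⟩, hne'⟩⟩

private lemma tendsto_CR (f : X ≃ₜ X) (x : X) :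
    ∀ δ > (0:ℝ), ∃ N : ℕ, ∀ n ≥ N, ∃ a ∈ CR ⇑f, dist ((⇑f)^[n] x) a ≤ δ := by
  intro δ hδ
  by_contra hcon
  push_neg at hcon
  have hfreq : ∃ᶠ n in atTop, ∀ a ∈ CR ⇑f, δ < dist ((⇑f)^[n] x) a := by
    rw [Filter.frequently_atTop]
    intro N
    obtain ⟨n, hn, hfar⟩ := hcon N
    exact ⟨n, hn, fun a ha => hfar a ha⟩
  obtain ⟨φ, hφ, hP⟩ := Filter.extraction_of_frequently_atTop hfreq
  obtain ⟨w, -, ψ, hψ, hw⟩ := IsCompact.tendsto_subseq (x := fun k => (⇑f)^[φ k] x)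
    isCompact_univ (fun n => Set.mem_univ _)
  have hwCR : w ∈ CR ⇑f := limit_mem_CR f x w (φ ∘ ψ) (hφ.comp hψ) hw
  obtain ⟨K₀, hK₀⟩ := (Metric.tendsto_atTop.1 hw) δ hδ
  exact absurd (hK₀ K₀ le_rfl) (not_lt.2 (hP (ψ K₀) w hwCR).le)

private lemma shadow (f : X ≃ₜ X) (h : (CR ⇑f).Finite) (x : X) {ε : ℝ} (hε : 0 < ε) :
    ∃ a ∈ CR ⇑f, ∃ N : ℕ, ∀ m : ℕ, dist ((⇑f)^[N+m] x) ((⇑f)^[m] a) ≤ ε := by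
  obtain ⟨s, hs, hsep⟩ := exists_sep h
  set ε₀ := min ε (s/3) with hε₀def
  have hε₀ : 0 < ε₀ := lt_min hε (by linarith)
  obtain ⟨δ₁', hδ₁', hmod⟩ := ucont (⇑f) f.continuous ε₀ hε₀
  set δ₁ := min δ₁' ε₀ with hδ₁def
  have hδ₁ : 0 < δ₁ := lt_min hδ₁' hε₀
  obtain ⟨N, hN⟩ := tendsto_CR f x δ₁ hδ₁
  have hch : ∀ m : ℕ, ∃ a, a ∈ CR ⇑f ∧ dist ((⇑f)^[N+m] x) a ≤ δ₁ := by
    intro m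
    obtain ⟨a, ha, hd⟩ := hN (N+m) (Nat.le_add_right _ _)
    exact ⟨a, ha, hd⟩
  choose a ha1 ha2 using hch
  have key : ∀ m, a (m+1) = f (a m) := by
    intro m
    have h1 : dist (f (a m)) (a (m+1)) < s := by
      have hA : dist (f (a m)) ((⇑f)^[N+(m+1)] x) ≤ ε₀ := by
        have hthis := hmod (a m) ((⇑f)^[N+m] x)
          (by rw [dist_comm]; exact (ha2 m).trans (min_le_left _ _))
        have heq : (⇑f)^[N+(m+1)] x = f ((⇑f)^[N+m] x) := by
          rw [show N+(m+1) = (N+m)+1 from by omega, Function.iterate_succ_apply']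
        rw [heq]
        exact hthis
      calc dist (f (a m)) (a (m+1))
          ≤ dist (f (a m)) ((⇑f)^[N+(m+1)] x) + dist ((⇑f)^[N+(m+1)] x) (a (m+1)) :=
            dist_triangle _ _ _
        _ ≤ ε₀ + δ₁ := add_le_add hA (ha2 (m+1))
        _ ≤ ε₀ + ε₀ := by
            have : δ₁ ≤ ε₀ := min_le_right _ _
            linarith
        _ < s := by
            have : ε₀ ≤ s/3 := min_le_right _ _
            linarith
    exact (hsep _ (CR_mapsTo f (a m) (ha1 m)) _ (ha1 (m+1)) h1).symm
  have horb : ∀ m, a m = (⇑f)^[m] (a 0) := by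
    intro m
    induction m with
    | zero => simp
    | succ m ih =>
      rw [key m, ih]
      exact (Function.iterate_succ_apply' (⇑f) m (a 0)).symm
  refine ⟨a 0, ha1 0, N, fun m => ?_⟩
  have hm := ha2 m
  rw [horb m] at hm
  exact hm.trans (le_trans (min_le_right _ _) (min_le_left _ _))

private lemma finmod (f : X ≃ₜ X) (K : ℕ) {ε : ℝ} (hε : 0 < ε) :
    ∃ δ > (0:ℝ), ∀ u v : X, dist u v ≤ δ → ∀ j ≤ K,
      dist ((⇑f)^[j] u) ((⇑f)^[j] v) ≤ ε ∧ dist ((⇑f.symm)^[j] u) ((⇑f.symm)^[j] v) ≤ ε := by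
  induction K with
  | zero =>
    exact ⟨ε, hε, fun u v huv j hj => by
      interval_cases j
      exact ⟨by simpa using huv, by simpa using huv⟩⟩
  | succ K ih =>
    obtain ⟨δK, hδK, hK⟩ := ih
    obtain ⟨δf, hδf, hf⟩ := ucont ((⇑f)^[K+1]) (f.continuous.iterate (K+1)) ε hε
    obtain ⟨δs, hδs, hs⟩ := ucont ((⇑f.symm)^[K+1]) (f.symm.continuous.iterate (K+1)) ε hε
    refine ⟨min δK (min δf δs), lt_min hδK (lt_min hδf hδs), fun u v huv j hj => ?_⟩
    rcases Nat.lt_or_ge j (K+1) with hj' | hj'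
    · exact hK u v (huv.trans (min_le_left _ _)) j (by omega)
    · have hj'' : j = K + 1 := by omega
      subst hj''
      exact ⟨hf u v (huv.trans ((min_le_right _ _).trans (min_le_left _ _))),
        hs u v (huv.trans ((min_le_right _ _).trans (min_le_right _ _)))⟩

private lemma B_finite (f : X ≃ₜ X) {e : ℝ} (he : 0 < e)
    (hexp : ∀ x y : X, (∀ i : ℤ, dist (ziter f i x) (ziter f i y) ≤ e) → x = y)
    (a b : X) (N M : ℕ) :
    {x : X | (∀ m, dist ((⇑f)^[N+m] x) ((⇑f)^[m] a) ≤ e/2) ∧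
      (∀ m, dist ((⇑f.symm)^[M+m] x) ((⇑f.symm)^[m] b) ≤ e/2)}.Finite := by
  set B := {x : X | (∀ m, dist ((⇑f)^[N+m] x) ((⇑f)^[m] a) ≤ e/2) ∧
      (∀ m, dist ((⇑f.symm)^[M+m] x) ((⇑f.symm)^[m] b) ≤ e/2)} with hB
  by_contra hinf
  have hinf : B.Infinite := hinf
  obtain ⟨δ₂, hδ₂, hδ₂mod⟩ := finmod f (max N M) he
  classical
  set g := hinf.natEmbedding with hg
  set u : ℕ → X := fun n => (g n : X) with hu
  have huB : ∀ n, u n ∈ B := fun n => (g n).2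
  have huinj : Function.Injective u := fun m n hmn => g.injective (Subtype.val_injective hmn)
  obtain ⟨w, -, ψ, hψ, hw⟩ := IsCompact.tendsto_subseq (x := u) isCompact_univ
    (fun n => Set.mem_univ _)
  obtain ⟨K₀, hK₀⟩ := (Metric.tendsto_atTop.1 hw) (δ₂/2) (by linarith)
  set y := u (ψ K₀) with hy
  set z := u (ψ (K₀+1)) with hz
  have hyz : y ≠ z := fun hyz' => by
    have := huinj hyz'
    have := hψ.injective this
    omega
  have hdyz : dist y z ≤ δ₂ := by
    calc dist y z ≤ dist y w + dist w z := dist_triangle _ _ _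
      _ ≤ δ₂/2 + δ₂/2 := add_le_add (hK₀ K₀ le_rfl).le
          (by rw [dist_comm]; exact (hK₀ (K₀+1) (by omega)).le)
      _ = δ₂ := by ring
  refine hyz (hexp y z ?_)
  intro i
  rcases le_or_gt 0 i with hi | hi
  · have hz1 : ziter f i y = (⇑f)^[i.toNat] y := by simp [ziter, hi]
    have hz2 : ziter f i z = (⇑f)^[i.toNat] z := by simp [ziter, hi]
    rw [hz1, hz2]
    rcases Nat.lt_or_ge i.toNat N with hiN | hiN
    · exact (hδ₂mod y z hdyz i.toNat (le_trans hiN.le (le_max_left _ _))).1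
    · set m := i.toNat - N with hm
      rw [show i.toNat = N + m from by omega]
      calc dist ((⇑f)^[N+m] y) ((⇑f)^[N+m] z)
          ≤ dist ((⇑f)^[N+m] y) ((⇑f)^[m] a) + dist ((⇑f)^[m] a) ((⇑f)^[N+m] z) :=
            dist_triangle _ _ _
        _ ≤ e/2 + e/2 := add_le_add ((huB (ψ K₀)).1 m)
            (by rw [dist_comm]; exact (huB (ψ (K₀+1))).1 m)
        _ = e := by ring
  · have hz1 : ziter f i y = (⇑f.symm)^[(-i).toNat] y := by simp [ziter, not_le.2 hi]
    have hz2 : ziter f i z = (⇑f.symm)^[(-i).toNat] z := by simp [ziter, not_le.2 hi]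
    rw [hz1, hz2]
    rcases Nat.lt_or_ge (-i).toNat M with hiM | hiM
    · exact (hδ₂mod y z hdyz (-i).toNat (le_trans hiM.le (le_max_right _ _))).2
    · set m := (-i).toNat - M with hm
      rw [show (-i).toNat = M + m from by omega]
      calc dist ((⇑f.symm)^[M+m] y) ((⇑f.symm)^[M+m] z)
          ≤ dist ((⇑f.symm)^[M+m] y) ((⇑f.symm)^[m] b)
            + dist ((⇑f.symm)^[m] b) ((⇑f.symm)^[M+m] z) := dist_triangle _ _ _
        _ ≤ e/2 + e/2 := add_le_add ((huB (ψ K₀)).2 m)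
            (by rw [dist_comm]; exact (huB (ψ (K₀+1))).2 m)
        _ = e := by ring

end Aux

theorem stmt_5 [CompactSpace X] (f : X ≃ₜ X) (hexp : Expansive f)
    (h : (CR ⇑f).Finite) :
    Countable X := by

  obtain ⟨e, he, hexpc⟩ := hexp
  have hS' : (CR ⇑f.symm).Finite := h.subset (CR_symm_subset f)
  haveI : Finite (CR ⇑f : Set X) := h.to_subtype
  haveI : Finite (CR ⇑f.symm : Set X) := hS'.to_subtype
  rw [← Set.countable_univ_iff]
  have hcover : (Set.univ : Set X) ⊆
      ⋃ (p : (CR ⇑f : Set X) × (CR ⇑f.symm : Set X) × ℕ × ℕ),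
        {x : X | (∀ m, dist ((⇑f)^[p.2.2.1+m] x) ((⇑f)^[m] (p.1 : X)) ≤ e/2) ∧
          (∀ m, dist ((⇑f.symm)^[p.2.2.2+m] x) ((⇑f.symm)^[m] (p.2.1 : X)) ≤ e/2)} := by
    intro x _
    obtain ⟨a, ha, N, hNa⟩ := shadow f h x (show (0:ℝ) < e/2 by linarith)
    obtain ⟨b, hb, M, hMb⟩ := shadow f.symm hS' x (show (0:ℝ) < e/2 by linarith)
    exact Set.mem_iUnion.2 ⟨⟨⟨a, ha⟩, ⟨b, hb⟩, N, M⟩, hNa, hMb⟩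
  refine Set.Countable.mono hcover (Set.countable_iUnion fun p => ?_)
  exact (B_finite f he hexpc (p.1 : X) (p.2.1 : X) p.2.2.1 p.2.2.2).countable
end

section
/- If C_j, j ≥ 1, are closed f-invariant subsets of a compact metric space X (f(C_j) = C_j) on each of which the homeomorphism f is chain transitive, and C_j → B in the Hausdorff distance, then f(B) = B and f|_B is chain transitive. -/
open Metric Filter Function Set

variable {X : Type*} [MetricSpace X]

/-- A δ-chain from x to y lying entirely in S. -/
def ChainIn (f : X → X) (S : Set X) (δ : ℝ) (x y : X) : Prop :=
  ∃ k : ℕ, 1 ≤ k ∧ ∃ c : ℕ → X, c 0 = x ∧ c k = y ∧ (∀ i ≤ k, c i ∈ S) ∧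
    ∀ i < k, dist (f (c i)) (c (i + 1)) ≤ δ

/-- Chain transitivity of f restricted to S. -/
def ChainTransOn (f : X → X) (S : Set X) : Prop :=
  ∀ x ∈ S, ∀ y ∈ S, ∀ δ > 0, ChainIn f S δ x y

/-! A δ-chain in `C_j` becomes a chain in `B` with slightly larger jumps once each of its points
is moved to a nearby point of `B`, because `f` is uniformly continuous. The same perturbation,
applied to single points under `f` and `f⁻¹`, shows that `B` is invariant. -/

theorem ChainIn.mono {f : X → X} {S : Set X} {δ δ' : ℝ} {x y : X} (h : ChainIn f S δ x y)
    (hδ : δ ≤ δ') : ChainIn f S δ' x y := by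
  obtain ⟨k, hk, c, hc0, hck, hcS, hstep⟩ := h
  exact ⟨k, hk, c, hc0, hck, hcS, fun i hi => (hstep i hi).trans hδ⟩

/-- Replace each point of the chain by an `η`-close point of `B`, the endpoints by `x` and `y`. -/
theorem ChainIn.of_hausdorffDist_lt {f : X → X} {C B : Set X} {δ ε η : ℝ} {x y x' y' : X}
    (h : ChainIn f C δ x' y') (hfη : ∀ a b, dist a b < η → dist (f a) (f b) < ε)
    (hCB : hausdorffDist C B < η) (hfin : hausdorffEDist C B ≠ ⊤)
    (hx : x ∈ B) (hy : y ∈ B) (hxx' : dist x' x < η) (hyy' : dist y' y < η) :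
    ChainIn f B (ε + δ + η) x y := by
  obtain ⟨k, hk, c, hc0, hck, hcC, hstep⟩ := h
  have hshadow : ∀ i, ∃ p, i ≤ k →
      p ∈ B ∧ dist (c i) p < η ∧ (i = 0 → p = x) ∧ (i = k → p = y) := by
    intro i
    by_cases hi0 : i = 0
    · exact ⟨x, fun _ => ⟨hx, by rwa [hi0, hc0], fun _ => rfl, by omega⟩⟩
    by_cases hik : i = k
    · exact ⟨y, fun _ => ⟨hy, by rwa [hik, hck], by omega, fun _ => rfl⟩⟩
    by_cases hle : i ≤ k
    · obtain ⟨p, hpB, hp⟩ := exists_dist_lt_of_hausdorffDist_lt (hcC i hle) hCB hfin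
      exact ⟨p, fun _ => ⟨hpB, hp, by omega, by omega⟩⟩
    · exact ⟨x, by omega⟩
  choose b hb using hshadow
  refine ⟨k, hk, b, (hb 0 (Nat.zero_le k)).2.2.1 rfl, (hb k le_rfl).2.2.2 rfl,
    fun i hi => (hb i hi).1, fun i hi => ?_⟩
  have hfb : dist (f (b i)) (f (c i)) < ε := hfη _ _ (by rw [dist_comm]; exact (hb i hi.le).2.1)
  have hcb : dist (c (i + 1)) (b (i + 1)) < η := (hb (i + 1) hi).2.1
  calc dist (f (b i)) (b (i + 1))
      ≤ dist (f (b i)) (f (c i)) + dist (f (c i)) (c (i + 1)) + dist (c (i + 1)) (b (i + 1)) :=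
        dist_triangle4 _ _ _ _
    _ ≤ ε + δ + η := by linarith [hstep i hi]

section HausdorffLimit

variable {ι : Type*} {l : Filter ι} [l.NeBot] {C : ι → Set X} {B : Set X}

theorem ChainTransOn.of_tendsto_hausdorffDist {f : X → X} (hf : UniformContinuous f)
    (hC : ∀ j, ChainTransOn f (C j)) (hfin : ∀ j, hausdorffEDist (C j) B ≠ ⊤)
    (hlim : Tendsto (fun j => hausdorffDist (C j) B) l (nhds 0)) : ChainTransOn f B := by
  intro x hx y hy δ hδ
  obtain ⟨η₀, hη₀, hfη₀⟩ := Metric.uniformContinuous_iff.mp hf (δ / 3) (by linarith)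
  set η := min η₀ (δ / 3)
  have hη : 0 < η := lt_min hη₀ (by linarith)
  have hfη : ∀ a b, dist a b < η → dist (f a) (f b) < δ / 3 :=
    fun a b hab => hfη₀ (hab.trans_le (min_le_left _ _))
  obtain ⟨j, hj⟩ := (hlim.eventually (gt_mem_nhds hη)).exists
  obtain ⟨x', hx'C, hxx'⟩ := exists_dist_lt_of_hausdorffDist_lt' hx hj (hfin j)
  obtain ⟨y', hy'C, hyy'⟩ := exists_dist_lt_of_hausdorffDist_lt' hy hj (hfin j)
  refine ((hC j x' hx'C y' hy'C (δ / 3) (by linarith)).of_hausdorffDist_lt hfη hj (hfin j)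
    hx hy hxx' hyy').mono ?_
  linarith [min_le_right η₀ (δ / 3)]

theorem mapsTo_of_tendsto_hausdorffDist {g : X → X} (hg : UniformContinuous g)
    (hC : ∀ j, MapsTo g (C j) (C j)) (hB : IsClosed B)
    (hfin : ∀ j, hausdorffEDist (C j) B ≠ ⊤)
    (hlim : Tendsto (fun j => hausdorffDist (C j) B) l (nhds 0)) : MapsTo g B B := by
  intro b hb
  rw [← hB.closure_eq, Metric.mem_closure_iff]
  intro ε hε
  obtain ⟨η, hη, hgη⟩ := Metric.uniformContinuous_iff.mp hg (ε / 2) (by linarith)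
  obtain ⟨j, hj⟩ := (hlim.eventually (gt_mem_nhds (lt_min hη (half_pos hε)))).exists
  obtain ⟨c, hcC, hcb⟩ := exists_dist_lt_of_hausdorffDist_lt' hb hj (hfin j)
  obtain ⟨b', hb'B, hgcb'⟩ := exists_dist_lt_of_hausdorffDist_lt (hC j hcC) hj (hfin j)
  have hgbc : dist (g b) (g c) < ε / 2 :=
    hgη (by rw [dist_comm]; exact hcb.trans_le (min_le_left _ _))
  refine ⟨b', hb'B, ?_⟩
  calc dist (g b) b' ≤ dist (g b) (g c) + dist (g c) b' := dist_triangle _ _ _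
    _ < ε := by linarith [min_le_right η (ε / 2)]

end HausdorffLimit

theorem stmt_13_general [CompactSpace X] (f : X ≃ₜ X) (C : ℕ → Set X) (B : Set X)
    (hCne : ∀ j, (C j).Nonempty)
    (hCinv : ∀ j, ⇑f '' C j = C j) (hCct : ∀ j, ChainTransOn ⇑f (C j))
    (hBc : IsClosed B) (hBne : B.Nonempty)
    (hlim : Filter.Tendsto (fun j => Metric.hausdorffDist (C j) B) atTop (nhds 0)) :
    ⇑f '' B = B ∧ ChainTransOn ⇑f B := by
  have hfin : ∀ j, hausdorffEDist (C j) B ≠ ⊤ := fun j =>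
    hausdorffEDist_ne_top_of_nonempty_of_bounded (hCne j) hBne
      isBounded_of_compactSpace isBounded_of_compactSpace
  have huc : UniformContinuous f := CompactSpace.uniformContinuous_of_continuous f.continuous
  have huc_symm : UniformContinuous f.symm :=
    CompactSpace.uniformContinuous_of_continuous f.symm.continuous
  have hfB : MapsTo f B B :=
    mapsTo_of_tendsto_hausdorffDist huc (fun j => mapsTo_iff_image_subset.mpr (hCinv j).subset)
      hBc hfin hlim
  have hfB_symm : MapsTo f.symm B B :=
    mapsTo_of_tendsto_hausdorffDist huc_symm
      (fun j => mapsTo_iff_image_subset.mpr <| by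
        rw [f.image_symm]; nth_rewrite 1 [← hCinv j]; rw [f.preimage_image])
      hBc hfin hlim
  exact ⟨hfB.image_subset.antisymm fun b hb => ⟨f.symm b, hfB_symm hb, f.apply_symm_apply b⟩,
    ChainTransOn.of_tendsto_hausdorffDist huc hCct hfin hlim⟩

theorem stmt_13 [CompactSpace X] (f : X ≃ₜ X) (C : ℕ → Set X) (B : Set X)
    (hCc : ∀ j, IsClosed (C j)) (hCne : ∀ j, (C j).Nonempty)
    (hCinv : ∀ j, ⇑f '' C j = C j) (hCct : ∀ j, ChainTransOn ⇑f (C j))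
    (hBc : IsClosed B) (hBne : B.Nonempty)
    (hlim : Filter.Tendsto (fun j => Metric.hausdorffDist (C j) B) atTop (nhds 0)) :
    ⇑f '' B = B ∧ ChainTransOn ⇑f B :=
  stmt_13_general f C B hCne hCinv hCct hBc hBne hlim
end
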